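/- Let d be a type, let ctx be a list of elements of d, let f be a formula of the deep-embedded diagrammatic language, and let P be a predicate on diagram models on d. Assume P is auto-dual, i.e., for every diagram model M on d, P M implies P (model_dual M). If formula_eval M ctx f holds for every diagram model M on d satisfying P, then formula_eval M ctx (formula_dual f) holds for every diagram model M on d satisfying P. -/
import Mathlib


/-- A finite quiver: a number of vertices (the vertex set being `{0, …, n-1}`)
together with a finite list of arcs, each arc a pair (source, target). -/
structure Quiv where
  nbVertex : ℕ
  arcs : List (ℕ × ℕ)

/-- The dual quiver: same vertices, every arc reversed. -/
def Quiv.dual (Q : Quiv) : Quiv :=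
  ⟨Q.nbVertex, Q.arcs.map fun a => (a.2, a.1)⟩

/-- A path from `u` to `v` in `Q`: a list of indices into `Q.arcs` selecting a chain
of consecutive arcs starting at `u` and ending at `v`. -/
inductive Quiv.IsPath (Q : Quiv) : ℕ → List ℕ → ℕ → Prop
  | nil (u : ℕ) : Quiv.IsPath Q u [] u
  | cons {u v w i : ℕ} {p : List ℕ} :
      Q.arcs[i]? = some (u, v) → Quiv.IsPath Q v p w → Quiv.IsPath Q u (i :: p) w

/-- A subquiver: a list of selected vertex labels and a list of selected arc
indices, determining a restriction operation on quivers. -/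
structure Subquiv where
  vertices : List ℕ
  arcs : List ℕ

/-- Terms of the deep-embedded language: variables (de Bruijn indices) and
restrictions along subquivers. -/
inductive Term where
  | var : ℕ → Term
  | restr : Subquiv → Term → Term

/-- Formulas of the deep-embedded first-order language for diagrams. -/
inductive Formula where
  | all : Quiv → Formula → Formula
  | ex : Quiv → Formula → Formula
  | imp : Formula → Formula → Formula
  | and : Formula → Formula → Formula
  | tru : Formula
  | commute : Term → Formula
  | eqD : Term → Term → Formula

/-- The dual formula: every quiver annotation is replaced by its dual quiver. -/
def Formula.dual : Formula → Formula
  | .all Q f => .all Q.dual f.dual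
  | .ex Q f => .ex Q.dual f.dual
  | .imp f1 f2 => .imp f1.dual f2.dual
  | .and f1 f2 => .and f1.dual f2.dual
  | .tru => .tru
  | .commute t => .commute t
  | .eqD t1 t2 => .eqD t1 t2

/-- A path relation: a family of equivalence relations on finite sequences of arc
indices, indexed by pairs of vertices, compatible with concatenation. -/
structure PathRel where
  rel : ℕ → ℕ → List ℕ → List ℕ → Prop
  equiv : ∀ u v, Equivalence (rel u v)
  comp : ∀ u v w p p' q q', rel u v p p' → rel v w q q' →
    rel u w (p ++ q) (p' ++ q')

/-- The dual path relation, on reversed paths. -/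
def PathRel.dual (r : PathRel) : PathRel where
  rel u v p q := r.rel v u p.reverse q.reverse
  equiv u v :=
    ⟨fun _ => (r.equiv v u).refl _, fun h => (r.equiv v u).symm h,
     fun h1 h2 => (r.equiv v u).trans h1 h2⟩
  comp u v w p p' q q' h1 h2 := by
    simpa [List.reverse_append] using r.comp w v u _ _ _ _ h2 h1

/-- A diagram model on a carrier type `d`: an underlying quiver map, a restriction
operation, a setoid (equivalence) relation, and a path relation for each diagram. -/
structure Model (d : Type*) where
  toQuiver : d → Quiv
  restr : Subquiv → d → d
  eqD : d → d → Prop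
  eqD_equiv : Equivalence eqD
  eqComp : d → PathRel

/-- The dual model: same carrier, restriction and setoid relation, but the quiver map
is composed with quiver dualization and each path relation is replaced by the path
relation on reversed paths. -/
def Model.dual {d : Type*} (M : Model d) : Model d where
  toQuiver D := (M.toQuiver D).dual
  restr := M.restr
  eqD := M.eqD
  eqD_equiv := M.eqD_equiv
  eqComp D := (M.eqComp D).dual

/-- A diagram commutes when its path relation is full on its underlying quiver:
any two paths with the same source and the same target are related. -/
def Model.Commutes {d : Type*} (M : Model d) (D : d) : Prop :=
  ∀ u v p q, (M.toQuiver D).IsPath u p v → (M.toQuiver D).IsPath u q v →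
    (M.eqComp D).rel u v p q

/-- Evaluation of a term in a context (a list of diagrams): `var k` looks up the
`k`-th entry (`none` if the context is too short), `restr m t` applies the
restriction operation. -/
def termEval {d : Type*} (M : Model d) (ctx : List d) : Term → Option d
  | .var k => ctx[k]?
  | .restr m t => (termEval M ctx t).map (M.restr m)

/-- Evaluation of a formula in a model, relative to a context of diagrams. -/
def formulaEval {d : Type*} (M : Model d) : List d → Formula → Prop
  | ctx, .all Q f => ∀ D : d, M.toQuiver D = Q → formulaEval M (D :: ctx) f
  | ctx, .ex Q f => ∃ D : d, M.toQuiver D = Q ∧ formulaEval M (D :: ctx) f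
  | ctx, .imp f1 f2 => formulaEval M ctx f1 → formulaEval M ctx f2
  | ctx, .and f1 f2 => formulaEval M ctx f1 ∧ formulaEval M ctx f2
  | _, .tru => True
  | ctx, .commute t =>
      match termEval M ctx t with
      | some D => M.Commutes D
      | none => False
  | ctx, .eqD t1 t2 =>
      match termEval M ctx t1, termEval M ctx t2 with
      | some D1, some D2 => M.eqD D1 D2
      | _, _ => False

lemma Quiv.dual_dual (Q : Quiv) : Q.dual.dual = Q := by
  cases Q; simp [Quiv.dual, Function.comp_def]

lemma Quiv.isPath_append {Q : Quiv} {a b c : ℕ} {p q : List ℕ}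
    (h1 : Q.IsPath a p b) (h2 : Q.IsPath b q c) : Q.IsPath a (p ++ q) c := by
  induction h1 with
  | nil => simpa
  | cons harc _ ih => exact .cons harc (ih h2)

lemma Quiv.isPath_dual {Q : Quiv} {u v : ℕ} {p : List ℕ}
    (h : Q.IsPath u p v) : Q.dual.IsPath v p.reverse u := by
  induction h with
  | nil => exact .nil _
  | @cons u v w i p harc _ ih =>
      have harc' : Q.dual.arcs[i]? = some (v, u) := by
        simp [Quiv.dual, List.getElem?_map, harc]
      simpa using Quiv.isPath_append ih (.cons harc' (.nil _))

lemma Quiv.isPath_dual_iff {Q : Quiv} {u v : ℕ} {p : List ℕ} :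
    Q.dual.IsPath u p v ↔ Q.IsPath v p.reverse u := by
  constructor
  · intro h
    have := Quiv.isPath_dual h
    rwa [Quiv.dual_dual] at this
  · intro h
    simpa using Quiv.isPath_dual h

lemma Model.dual_commutes_iff {d : Type*} (M : Model d) (D : d) :
    M.dual.Commutes D ↔ M.Commutes D := by
  constructor
  · intro h u v p q hp hq
    have := h v u p.reverse q.reverse (Quiv.isPath_dual hp) (Quiv.isPath_dual hq)
    simpa [Model.dual, PathRel.dual] using this
  · intro h u v p q hp hq
    exact h v u p.reverse q.reverse (Quiv.isPath_dual_iff.mp hp)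
      (Quiv.isPath_dual_iff.mp hq)

lemma termEval_dual {d : Type*} (M : Model d) (ctx : List d) (t : Term) :
    termEval M.dual ctx t = termEval M ctx t := by
  induction t with
  | var k => rfl
  | restr m t ih => simp only [termEval, ih]; rfl

lemma formulaEval_dual {d : Type*} (M : Model d) (f : Formula) :
    ∀ ctx, formulaEval M.dual ctx f ↔ formulaEval M ctx f.dual := by
  induction f with
  | all Q f ih =>
      intro ctx
      simp only [formulaEval, Formula.dual, Model.dual]
      constructor
      · intro h D hD
        exact (ih _).mp (h D (by rw [hD, Quiv.dual_dual]))
      · intro h D hD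
        exact (ih _).mpr (h D (by rw [← hD, Quiv.dual_dual]))
  | ex Q f ih =>
      intro ctx
      simp only [formulaEval, Formula.dual, Model.dual]
      constructor
      · rintro ⟨D, hD, h⟩
        exact ⟨D, by rw [← hD, Quiv.dual_dual], (ih _).mp h⟩
      · rintro ⟨D, hD, h⟩
        exact ⟨D, by rw [hD, Quiv.dual_dual], (ih _).mpr h⟩
  | imp f1 f2 ih1 ih2 =>
      intro ctx
      simp only [formulaEval, Formula.dual]
      rw [ih1, ih2]
  | and f1 f2 ih1 ih2 =>
      intro ctx
      simp only [formulaEval, Formula.dual]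
      rw [ih1, ih2]
  | tru => intro ctx; simp [formulaEval, Formula.dual]
  | commute t =>
      intro ctx
      simp only [formulaEval, Formula.dual, termEval_dual]
      cases termEval M ctx t with
      | none => rfl
      | some D => exact Model.dual_commutes_iff M D
  | eqD t1 t2 =>
      intro ctx
      simp only [formulaEval, Formula.dual, termEval_dual]
      rfl

/-- Duality theorem relativized to a class `P` of models: if `P` is stable under
model dualization and a formula is valid in every model of `P`, then so is its dual
formula. -/
theorem duality_theorem_with_theory {d : Type*} (ctx : List d) (f : Formula)
    (P : Model d → Prop)
    (hP : ∀ M : Model d, P M → P M.dual)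
    (h : ∀ M : Model d, P M → formulaEval M ctx f) :
    ∀ M : Model d, P M → formulaEval M ctx f.dual := by
  intro M hM
  exact (formulaEval_dual M f ctx).mp (h M.dual (hP M hM))
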